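/- Given X_* ∈ 𝕆^{n×k}, let X_*ᵀD = UΣVᵀ be a singular value decomposition with U, V ∈ 𝕆^{k×k} and Σ = diag(σ₁, …, σ_k), σ₁ ≥ ⋯ ≥ σ_k ≥ 0, and let r = rank(X_*ᵀD). Then every maximizer Q_opt of the problem max_{Q ∈ 𝕆^{k×k}} f_θ(X_*Q) satisfies X_*Q_opt = X_* U_{(:,1:r)} V_{(:,1:r)}ᵀ + X_* U_{(:,r+1:k)} W V_{(:,r+1:k)}ᵀ for some W ∈ 𝕆^{(k−r)×(k−r)}, where the first term has rank r and the second term has rank k − r. Moreover, [X_*Q_opt]ᵀ D = VΣVᵀ is symmetric positive semidefinite and tr([X_*Q_opt]ᵀD) = ‖X_*ᵀD‖_tr. -/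

import Mathlib

/-!
Replacing `X` by `X Q` with `Q` orthogonal leaves `tr(XᵀAX)` and `tr(XᵀBX)` unchanged, and
`tr(XᵀBX) > 0` since `BX = 0` would force `rank B ≤ n - k`. So `Q_opt` maximizes
`Q ↦ tr(Qᵀ N)`, where `N = X_*ᵀ D = U Σ Vᵀ`. For the orthogonal matrix `P = Uᵀ Q V` one has
`tr(Qᵀ N) = ∑ P_ii σ_i ≤ ∑ σ_i`, with equality at `Q = U Vᵀ`; hence `P_ii = 1` whenever
`σ_i > 0`. A unit diagonal entry of an orthogonal matrix kills the rest of its row and column,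
so `P = diag(I_r, W)` with `W` orthogonal, which is the claimed form of `Q_opt = U P Vᵀ`.
Moreover `Pᵀ Σ = Σ`, so `Q_optᵀ N = V Σ Vᵀ` is a positive semidefinite square root of `Nᵀ N`,
whose trace is therefore the trace norm of `N`.
-/

open Matrix

noncomputable section

/-- `f_θ(X) = tr(XᵀAX + XᵀD) / (tr(XᵀBX))^θ`. -/
def fTheta {n k : ℕ} (A B : Matrix (Fin n) (Fin n) ℝ) (D : Matrix (Fin n) (Fin k) ℝ)
    (θ : ℝ) (X : Matrix (Fin n) (Fin k) ℝ) : ℝ :=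
  (trace (Xᵀ * A * X) + trace (Xᵀ * D)) / trace (Xᵀ * B * X) ^ θ

/-- The trace norm (sum of singular values) of a real matrix. -/
def traceNorm {m k : ℕ} (M : Matrix (Fin m) (Fin k) ℝ) : ℝ :=
  ∑ i, Real.sqrt ((Matrix.isHermitian_conjTranspose_mul_self M).eigenvalues i)

/-- Columns `1:r` of a `k×k` matrix. -/
def colsFirst {k : ℕ} (M : Matrix (Fin k) (Fin k) ℝ) (r : ℕ) (h : r ≤ k) :
    Matrix (Fin k) (Fin r) ℝ :=
  M.submatrix id fun i => Fin.castLE h i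

/-- Columns `r+1:k` of a `k×k` matrix. -/
def colsLast {k : ℕ} (M : Matrix (Fin k) (Fin k) ℝ) (r : ℕ) (h : r ≤ k) :
    Matrix (Fin k) (Fin (k - r)) ℝ :=
  M.submatrix id fun i : Fin (k - r) => ⟨r + i.1, by omega⟩

section Orthogonal

variable {ι : Type*} [Fintype ι]

lemma eq_zero_of_sum_sq_eq_one_of_eq_one {v : ι → ℝ} (hv : ∑ l, v l ^ 2 = 1) {j : ι}
    (hj : v j = 1) {i : ι} (hij : i ≠ j) : v i = 0 := by
  classical
  have hsplit := Finset.add_sum_erase Finset.univ (fun l => v l ^ 2) (Finset.mem_univ j)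
  rw [hj, hv, one_pow, add_eq_left] at hsplit
  have := (Finset.sum_eq_zero_iff_of_nonneg fun l _ => sq_nonneg (v l)).mp hsplit i
    (Finset.mem_erase.mpr ⟨hij, Finset.mem_univ i⟩)
  exact pow_eq_zero_iff two_ne_zero |>.mp this

variable [DecidableEq ι] {P : Matrix ι ι ℝ}

lemma sum_sq_col_eq_one (hP : Pᵀ * P = 1) (j : ι) : ∑ l, P l j ^ 2 = 1 := by
  simpa [mul_apply, sq] using congrFun (congrFun hP j) j

lemma sum_sq_row_eq_one (hP : Pᵀ * P = 1) (i : ι) : ∑ l, P i l ^ 2 = 1 := by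
  have hP' : P * Pᵀ = 1 := mul_eq_one_comm.mp hP
  simpa [mul_apply, sq] using congrFun (congrFun hP' i) i

lemma diag_le_one_of_orthogonal (hP : Pᵀ * P = 1) (i : ι) : P i i ≤ 1 := by
  have hsq : P i i ^ 2 ≤ 1 := sum_sq_col_eq_one hP i ▸
    Finset.single_le_sum (fun l _ => sq_nonneg (P l i)) (Finset.mem_univ i)
  exact (abs_le.mp ((sq_le_one_iff_abs_le_one _).mp hsq)).2

lemma apply_eq_zero_of_diag_eq_one_left (hP : Pᵀ * P = 1) {j : ι} (hj : P j j = 1) {i : ι}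
    (hij : i ≠ j) : P i j = 0 :=
  eq_zero_of_sum_sq_eq_one_of_eq_one (v := fun l => P l j) (sum_sq_col_eq_one hP j) hj hij

lemma apply_eq_zero_of_diag_eq_one_right (hP : Pᵀ * P = 1) {i : ι} (hi : P i i = 1) {j : ι}
    (hij : j ≠ i) : P i j = 0 :=
  eq_zero_of_sum_sq_eq_one_of_eq_one (v := fun l => P i l) (sum_sq_row_eq_one hP i) hi hij

lemma transpose_mul_diagonal_of_diag_eq_one (hP : Pᵀ * P = 1) {σ : ι → ℝ}
    (hdiag : ∀ i, σ i ≠ 0 → P i i = 1) : Pᵀ * diagonal σ = diagonal σ := by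
  ext i j
  rw [mul_diagonal, transpose_apply]
  by_cases hij : i = j
  · subst hij
    by_cases hσ : σ i = 0 <;> simp [hσ, hdiag]
  by_cases hσ : σ j = 0
  · simp [hσ, diagonal_apply_ne _ hij]
  · simp [apply_eq_zero_of_diag_eq_one_right hP (hdiag j hσ) hij, diagonal_apply_ne _ hij]

lemma exists_eq_fromBlocks_one_of_diag_eq_one {κ : Type*} [Fintype κ] [DecidableEq κ]
    {P : Matrix (ι ⊕ κ) (ι ⊕ κ) ℝ} (hP : Pᵀ * P = 1)
    (hdiag : ∀ i, P (.inl i) (.inl i) = 1) :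
    ∃ W : Matrix κ κ ℝ, Wᵀ * W = 1 ∧ P = fromBlocks 1 0 0 W := by
  have h₁₁ : P.toBlocks₁₁ = 1 := by
    ext i i'
    by_cases h : i = i'
    · subst h
      simp [toBlocks₁₁, hdiag]
    · simp [toBlocks₁₁, one_apply_ne h,
        apply_eq_zero_of_diag_eq_one_left hP (hdiag i') (Sum.inl_injective.ne h)]
  have h₁₂ : P.toBlocks₁₂ = 0 := by
    ext i j
    exact apply_eq_zero_of_diag_eq_one_right hP (hdiag i) Sum.inr_ne_inl
  have h₂₁ : P.toBlocks₂₁ = 0 := by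
    ext j i
    exact apply_eq_zero_of_diag_eq_one_left hP (hdiag i) Sum.inr_ne_inl
  have hPW : P = fromBlocks 1 0 0 P.toBlocks₂₂ := by
    rw [← h₁₁, ← h₁₂, ← h₂₁, fromBlocks_toBlocks]
  refine ⟨P.toBlocks₂₂, ?_, hPW⟩
  rw [hPW, fromBlocks_transpose, fromBlocks_multiply, ← fromBlocks_one] at hP
  simpa using (fromBlocks_inj.mp hP).2.2.2

end Orthogonal

section Orthonormal

variable {m n ι : Type*} [Fintype m]

lemma transpose_mul_self_mul_eq_one [Fintype n] [DecidableEq n] [DecidableEq ι]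
    {X : Matrix m n ℝ} {C : Matrix n ι ℝ} (hX : Xᵀ * X = 1) (hC : Cᵀ * C = 1) :
    (X * C)ᵀ * (X * C) = 1 := by
  rw [transpose_mul, Matrix.mul_assoc, ← Matrix.mul_assoc Xᵀ, hX, Matrix.one_mul, hC]

lemma transpose_mul_self_submatrix_eq_one [DecidableEq n] [DecidableEq ι]
    {M : Matrix m n ℝ} (hM : Mᵀ * M = 1) {f : ι → n} (hf : Function.Injective f) :
    (M.submatrix id f)ᵀ * M.submatrix id f = 1 := by
  rw [transpose_submatrix, ← submatrix_mul _ _ _ _ _ Function.bijective_id, hM,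
    submatrix_one _ hf]

lemma rank_mul_transpose_of_orthonormal [Fintype n] [Fintype ι] [DecidableEq ι]
    {Y : Matrix m ι ℝ} {Z : Matrix n ι ℝ} (hY : Yᵀ * Y = 1) (hZ : Zᵀ * Z = 1) :
    (Y * Zᵀ).rank = Fintype.card ι := by
  have hYZ : (Y * Zᵀ)ᵀ * (Y * Zᵀ) = Z * Zᵀ := by
    rw [transpose_mul, transpose_transpose, Matrix.mul_assoc, ← Matrix.mul_assoc Yᵀ, hY,
      Matrix.one_mul]
  rw [← rank_transpose_mul_self, hYZ, rank_self_mul_transpose, ← rank_transpose_mul_self, hZ,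
    rank_one]

end Orthonormal

def finSumFinSubEquiv {k r : ℕ} (h : r ≤ k) : Fin r ⊕ Fin (k - r) ≃ Fin k :=
  finSumFinEquiv.trans (finCongr (Nat.add_sub_cancel' h))

lemma submatrix_finSumFinSubEquiv {k r : ℕ} (M : Matrix (Fin k) (Fin k) ℝ) (h : r ≤ k) :
    M.submatrix id (finSumFinSubEquiv h) = fromCols (colsFirst M r h) (colsLast M r h) := by
  ext i (a | b) <;> rfl

lemma colsFirst_orthonormal {k r : ℕ} {M : Matrix (Fin k) (Fin k) ℝ} (hM : Mᵀ * M = 1)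
    (h : r ≤ k) : (colsFirst M r h)ᵀ * colsFirst M r h = 1 :=
  transpose_mul_self_submatrix_eq_one hM (Fin.castLE_injective h)

lemma colsLast_orthonormal {k r : ℕ} {M : Matrix (Fin k) (Fin k) ℝ} (hM : Mᵀ * M = 1)
    (h : r ≤ k) : (colsLast M r h)ᵀ * colsLast M r h = 1 :=
  transpose_mul_self_submatrix_eq_one hM fun a b hab => by
    have := congrArg Fin.val hab
    simp only at this
    omega

lemma mul_mul_transpose_eq_colsFirst_add_colsLast {k r : ℕ} (h : r ≤ k)
    (U V : Matrix (Fin k) (Fin k) ℝ) {P : Matrix (Fin k) (Fin k) ℝ} (hP : Pᵀ * P = 1)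
    (hdiag : ∀ i : Fin k, i < r → P i i = 1) :
    ∃ W : Matrix (Fin (k - r)) (Fin (k - r)) ℝ, Wᵀ * W = 1 ∧
      U * P * Vᵀ =
        colsFirst U r h * (colsFirst V r h)ᵀ + colsLast U r h * W * (colsLast V r h)ᵀ := by
  set e := finSumFinSubEquiv h
  obtain ⟨W, hW, hPW⟩ := exists_eq_fromBlocks_one_of_diag_eq_one (P := P.submatrix e e)
    (by rw [transpose_submatrix, submatrix_mul_equiv, hP, submatrix_one_equiv])
    (fun a => hdiag (e (.inl a)) a.isLt)
  refine ⟨W, hW, ?_⟩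
  calc U * P * Vᵀ = U.submatrix id e * P.submatrix e e * (V.submatrix id e)ᵀ := by
        rw [transpose_submatrix, submatrix_mul_equiv, submatrix_mul_equiv, submatrix_id_id]
    _ = _ := by
        rw [hPW, submatrix_finSumFinSubEquiv, submatrix_finSumFinSubEquiv, fromCols_mul_fromBlocks,
          transpose_fromCols, fromCols_mul_fromRows]
        simp

section SVD

variable {ι : Type*} [Fintype ι] [DecidableEq ι] {U V Q : Matrix ι ι ℝ} {σ : ι → ℝ}

lemma transpose_mul_self_conj_eq_one (hU : Uᵀ * U = 1) (hV : Vᵀ * V = 1) (hQ : Qᵀ * Q = 1) :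
    (Uᵀ * Q * V)ᵀ * (Uᵀ * Q * V) = 1 :=
  transpose_mul_self_mul_eq_one
    (transpose_mul_self_mul_eq_one (by rw [transpose_transpose]; exact mul_eq_one_comm.mp hU) hQ)
    hV

lemma transpose_mul_svd (hV : Vᵀ * V = 1) :
    Qᵀ * (U * diagonal σ * Vᵀ) = V * ((Uᵀ * Q * V)ᵀ * diagonal σ) * Vᵀ := by
  have hVV : V * Vᵀ = 1 := mul_eq_one_comm.mp hV
  rw [transpose_mul, transpose_mul, transpose_transpose]
  simp only [Matrix.mul_assoc]
  rw [← Matrix.mul_assoc V, hVV, Matrix.one_mul]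

lemma trace_transpose_mul_svd (hV : Vᵀ * V = 1) :
    trace (Qᵀ * (U * diagonal σ * Vᵀ)) = ∑ i, (Uᵀ * Q * V) i i * σ i := by
  rw [transpose_mul_svd hV, trace_mul_cycle, hV, Matrix.one_mul]
  simp only [trace, diag_apply, mul_diagonal, transpose_apply]

lemma diag_eq_one_of_isMax_trace (hU : Uᵀ * U = 1) (hV : Vᵀ * V = 1) (hQ : Qᵀ * Q = 1)
    (hσ : ∀ i, 0 ≤ σ i)
    (hmax : ∀ Q' : Matrix ι ι ℝ, Q'ᵀ * Q' = 1 →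
      trace (Q'ᵀ * (U * diagonal σ * Vᵀ)) ≤ trace (Qᵀ * (U * diagonal σ * Vᵀ)))
    {i : ι} (hi : σ i ≠ 0) : (Uᵀ * Q * V) i i = 1 := by
  have hP := transpose_mul_self_conj_eq_one hU hV hQ
  have hUV : Uᵀ * (U * Vᵀ) * V = 1 := by
    rw [← Matrix.mul_assoc, hU, Matrix.one_mul, hV]
  have hle : ∀ j ∈ Finset.univ, (Uᵀ * Q * V) j j * σ j ≤ σ j := fun j _ =>
    mul_le_of_le_one_left (hσ j) (diag_le_one_of_orthogonal hP j)
  have hge : ∑ j, σ j ≤ ∑ j, (Uᵀ * Q * V) j j * σ j := by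
    have := hmax (U * Vᵀ) (transpose_mul_self_mul_eq_one hU
      (by rw [transpose_transpose]; exact mul_eq_one_comm.mp hV))
    rw [trace_transpose_mul_svd hV, trace_transpose_mul_svd hV, hUV] at this
    simpa using this
  have hi' := (Finset.sum_eq_sum_iff_of_le hle).mp (le_antisymm (Finset.sum_le_sum hle) hge) i
    (Finset.mem_univ i)
  exact mul_right_cancel₀ hi (by rw [hi', one_mul])

lemma transpose_mul_self_svd (hU : Uᵀ * U = 1) (hV : Vᵀ * V = 1) :
    (U * diagonal σ * Vᵀ)ᵀ * (U * diagonal σ * Vᵀ) =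
      V * diagonal σ * Vᵀ * (V * diagonal σ * Vᵀ) := by
  rw [transpose_mul, transpose_mul, diagonal_transpose, transpose_transpose]
  simp only [Matrix.mul_assoc]
  rw [← Matrix.mul_assoc Uᵀ, hU, ← Matrix.mul_assoc Vᵀ, hV, Matrix.one_mul]

end SVD

open scoped MatrixOrder in
lemma trace_transpose_mul_mul_pos {n k : ℕ} {B : Matrix (Fin n) (Fin n) ℝ} (hB : B.PosSemidef)
    (hrank : n - k < B.rank) {X : Matrix (Fin n) (Fin k) ℝ} (hX : Xᵀ * X = 1) :
    0 < trace (Xᵀ * B * X) := by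
  obtain ⟨C, rfl⟩ := CStarAlgebra.nonneg_iff_eq_star_mul_self.mp hB.nonneg
  have hBX : Xᵀ * (star C * C) * X = (C * X)ᴴ * (C * X) := by
    rw [conjTranspose_mul, conjTranspose_eq_transpose_of_trivial, star_eq_conjTranspose]
    simp only [Matrix.mul_assoc]
  rw [hBX]
  refine (posSemidef_conjTranspose_mul_self _).trace_nonneg.lt_of_ne fun h0 => ?_
  have hCX : star C * C * X = 0 := by
    rw [Matrix.mul_assoc, trace_conjTranspose_mul_self_eq_zero_iff.mp h0.symm, Matrix.mul_zero]
  have hrankX : X.rank = k := by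
    rw [← rank_transpose_mul_self, hX, rank_one, Fintype.card_fin]
  have := rank_add_rank_le_card_of_mul_eq_zero hCX
  rw [hrankX, Fintype.card_fin] at this
  omega

lemma fTheta_mul_orthogonal {n k : ℕ} (A B : Matrix (Fin n) (Fin n) ℝ)
    (D : Matrix (Fin n) (Fin k) ℝ) (θ : ℝ) (X : Matrix (Fin n) (Fin k) ℝ)
    {Q : Matrix (Fin k) (Fin k) ℝ} (hQ : Qᵀ * Q = 1) :
    fTheta A B D θ (X * Q) =
      (trace (Xᵀ * A * X) + trace (Qᵀ * (Xᵀ * D))) / trace (Xᵀ * B * X) ^ θ := by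
  have hQQ : Q * Qᵀ = 1 := mul_eq_one_comm.mp hQ
  have hconj : ∀ M : Matrix (Fin n) (Fin n) ℝ,
      trace ((X * Q)ᵀ * M * (X * Q)) = trace (Xᵀ * M * X) :=
    fun M => by
      have : (X * Q)ᵀ * M * (X * Q) = Qᵀ * (Xᵀ * M * X) * Q := by
        rw [transpose_mul]
        simp only [Matrix.mul_assoc]
      rw [this, trace_mul_cycle, hQQ, Matrix.one_mul]
  rw [fTheta, hconj, hconj, transpose_mul, Matrix.mul_assoc Qᵀ]

lemma trace_le_of_isMax_fTheta {n k : ℕ} {A B : Matrix (Fin n) (Fin n) ℝ} (hB : B.PosSemidef)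
    (hrank : n - k < B.rank) {D : Matrix (Fin n) (Fin k) ℝ} {θ : ℝ}
    {X : Matrix (Fin n) (Fin k) ℝ} (hX : Xᵀ * X = 1) {Qopt : Matrix (Fin k) (Fin k) ℝ}
    (hQopt : Qoptᵀ * Qopt = 1)
    (hmax : ∀ Q : Matrix (Fin k) (Fin k) ℝ, Qᵀ * Q = 1 →
      fTheta A B D θ (X * Q) ≤ fTheta A B D θ (X * Qopt))
    {Q : Matrix (Fin k) (Fin k) ℝ} (hQ : Qᵀ * Q = 1) :
    trace (Qᵀ * (Xᵀ * D)) ≤ trace (Qoptᵀ * (Xᵀ * D)) := by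
  have hden := Real.rpow_pos_of_pos (trace_transpose_mul_mul_pos hB hrank hX) θ
  have := hmax Q hQ
  rw [fTheta_mul_orthogonal _ _ _ _ _ hQ, fTheta_mul_orthogonal _ _ _ _ _ hQopt,
    div_le_div_iff_of_pos_right hden] at this
  linarith

open scoped MatrixOrder in
lemma traceNorm_eq_trace_of_mul_self_eq {m k : ℕ} {M : Matrix (Fin m) (Fin k) ℝ}
    {S : Matrix (Fin k) (Fin k) ℝ} (hS : S.PosSemidef) (h : S * S = Mᵀ * M) :
    traceNorm M = trace S := by
  have hMM : (Mᴴ * M).PosSemidef := posSemidef_conjTranspose_mul_self M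
  have h' : S * S = Mᴴ * M := by rwa [conjTranspose_eq_transpose_of_trivial]
  rw [(CFC.sqrt_unique h' hS.nonneg).symm,
    CFC.sqrt_eq_real_sqrt _ hMM.nonneg, cfcₙ_eq_cfc, hMM.1.cfc_eq, IsHermitian.cfc,
    Unitary.conjStarAlgAut_apply, trace_mul_cycle, Unitary.coe_star_mul_self, Matrix.one_mul,
    trace_diagonal, traceNorm]
  simp [RCLike.ofReal_real_eq_id]

theorem stmt10_general {n k : ℕ}
    (A B : Matrix (Fin n) (Fin n) ℝ) (hB : B.PosSemidef)
    (hrank : n - k < B.rank)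
    (D : Matrix (Fin n) (Fin k) ℝ) (θ : ℝ)
    (Xs : Matrix (Fin n) (Fin k) ℝ) (hXs : Xsᵀ * Xs = 1)
    (U V : Matrix (Fin k) (Fin k) ℝ) (hU : Uᵀ * U = 1) (hV : Vᵀ * V = 1)
    (σ : Fin k → ℝ) (hσpos : ∀ i, 0 ≤ σ i)
    (hSVD : Xsᵀ * D = U * Matrix.diagonal σ * Vᵀ)
    (r : ℕ) (hrk : r ≤ k)
    (hσr : ∀ i : Fin k, 0 < σ i ↔ (i : ℕ) < r)
    (Qopt : Matrix (Fin k) (Fin k) ℝ) (hQopt : Qoptᵀ * Qopt = 1)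
    (hmax : ∀ Q : Matrix (Fin k) (Fin k) ℝ, Qᵀ * Q = 1 →
      fTheta A B D θ (Xs * Q) ≤ fTheta A B D θ (Xs * Qopt)) :
    (∃ W : Matrix (Fin (k - r)) (Fin (k - r)) ℝ, Wᵀ * W = 1 ∧
        Xs * Qopt = Xs * colsFirst U r hrk * (colsFirst V r hrk)ᵀ
            + Xs * colsLast U r hrk * W * (colsLast V r hrk)ᵀ
          ∧ (Xs * colsLast U r hrk * W * (colsLast V r hrk)ᵀ).rank = k - r)
      ∧ (Xs * colsFirst U r hrk * (colsFirst V r hrk)ᵀ).rank = r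
      ∧ (Xs * Qopt)ᵀ * D = V * Matrix.diagonal σ * Vᵀ
      ∧ ((Xs * Qopt)ᵀ * D).PosSemidef
      ∧ trace ((Xs * Qopt)ᵀ * D) = traceNorm (Xsᵀ * D) := by
  set P := Uᵀ * Qopt * V
  have hdiag : ∀ i, σ i ≠ 0 → P i i = 1 := fun i =>
    diag_eq_one_of_isMax_trace hU hV hQopt hσpos fun Q hQ =>
      hSVD ▸ trace_le_of_isMax_fTheta hB hrank hXs hQopt hmax hQ
  have hP : Pᵀ * P = 1 := transpose_mul_self_conj_eq_one hU hV hQopt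
  have hQ : Qopt = U * P * Vᵀ := by
    simp only [P, Matrix.mul_assoc, mul_eq_one_comm.mp hV, Matrix.mul_one]
    rw [← Matrix.mul_assoc, mul_eq_one_comm.mp hU, Matrix.one_mul]
  obtain ⟨W, hW, hUPV⟩ := mul_mul_transpose_eq_colsFirst_add_colsLast hrk U V hP
    fun i hi => hdiag i ((hσr i).mpr hi).ne'
  have hQD : (Xs * Qopt)ᵀ * D = V * diagonal σ * Vᵀ := by
    rw [transpose_mul, Matrix.mul_assoc, hSVD, transpose_mul_svd hV,
      transpose_mul_diagonal_of_diag_eq_one hP hdiag]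
  have hPSD : (V * diagonal σ * Vᵀ).PosSemidef := by
    simpa using ((posSemidef_diagonal_iff.mpr hσpos).mul_mul_conjTranspose_same V)
  have hXU₁ := transpose_mul_self_mul_eq_one hXs (colsFirst_orthonormal hU hrk)
  have hXU₂ := transpose_mul_self_mul_eq_one hXs (colsLast_orthonormal hU hrk)
  refine ⟨⟨W, hW, ?_, ?_⟩, ?_, hQD, hQD ▸ hPSD, ?_⟩
  · rw [hQ, hUPV, Matrix.mul_add]
    simp only [Matrix.mul_assoc]
  · simpa using rank_mul_transpose_of_orthonormal (transpose_mul_self_mul_eq_one hXU₂ hW)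
      (colsLast_orthonormal hV hrk)
  · simpa using rank_mul_transpose_of_orthonormal hXU₁ (colsFirst_orthonormal hV hrk)
  · rw [hQD, traceNorm_eq_trace_of_mul_self_eq hPSD (hSVD ▸ (transpose_mul_self_svd hU hV).symm)]

/-- Theorem 3.5: structure of the maximizers of `f_θ(X_*Q)` over the orthogonal group. -/
theorem stmt10 {n k : ℕ} (hk : 1 ≤ k) (hkn : k < n)
    (A B : Matrix (Fin n) (Fin n) ℝ) (hA : A.IsSymm) (hB : B.PosSemidef)
    (hrank : n - k < B.rank)
    (D : Matrix (Fin n) (Fin k) ℝ) (θ : ℝ) (hθ0 : 0 ≤ θ) (hθ1 : θ ≤ 1)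
    (Xs : Matrix (Fin n) (Fin k) ℝ) (hXs : Xsᵀ * Xs = 1)
    (U V : Matrix (Fin k) (Fin k) ℝ) (hU : Uᵀ * U = 1) (hV : Vᵀ * V = 1)
    (σ : Fin k → ℝ) (hσmono : Antitone σ) (hσpos : ∀ i, 0 ≤ σ i)
    (hSVD : Xsᵀ * D = U * Matrix.diagonal σ * Vᵀ)
    (r : ℕ) (hr : r = (Xsᵀ * D).rank) (hrk : r ≤ k)
    (hσr : ∀ i : Fin k, 0 < σ i ↔ (i : ℕ) < r)
    (Qopt : Matrix (Fin k) (Fin k) ℝ) (hQopt : Qoptᵀ * Qopt = 1)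
    (hmax : ∀ Q : Matrix (Fin k) (Fin k) ℝ, Qᵀ * Q = 1 →
      fTheta A B D θ (Xs * Q) ≤ fTheta A B D θ (Xs * Qopt)) :
    (∃ W : Matrix (Fin (k - r)) (Fin (k - r)) ℝ, Wᵀ * W = 1 ∧
        Xs * Qopt = Xs * colsFirst U r hrk * (colsFirst V r hrk)ᵀ
            + Xs * colsLast U r hrk * W * (colsLast V r hrk)ᵀ
          ∧ (Xs * colsLast U r hrk * W * (colsLast V r hrk)ᵀ).rank = k - r)
      ∧ (Xs * colsFirst U r hrk * (colsFirst V r hrk)ᵀ).rank = r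
      ∧ (Xs * Qopt)ᵀ * D = V * Matrix.diagonal σ * Vᵀ
      ∧ ((Xs * Qopt)ᵀ * D).PosSemidef
      ∧ trace ((Xs * Qopt)ᵀ * D) = traceNorm (Xsᵀ * D) :=
  stmt10_general A B hB hrank D θ Xs hXs U V hU hV σ hσpos hSVD r hrk hσr Qopt hQopt hmax

end
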